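/- Assume moment condition (C2) and let δ > 1. For m ∈ ℤ and n ≥ 1 set p^{(δ)}_{n,m} = Σ h_μ(ℓ), the sum over integers ℓ with 2|m|^δ < ℓ ≤ 2n and ℓ ≡ m (mod 2). Then for every absolutely summable sequence (c_m)_{m∈ℤ}, Σ_{m∈ℤ} c_m p^{(δ)}_{n,m} = ι_μ(2n) Σ_{m∈ℤ} c_m + o(ι_μ(2n)) as n → ∞. -/

import Mathlib

/-!
When `n` increases by one, `p^{(δ)}_{n,m}` gains exactly one term `h ℓ` with
`ℓ ∈ {2n+1, 2n+2}`, while `ι (2n)` gains `(1/2) ∫_{2n}^{2n+2} h`. By the mean value theorem these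
increments differ by `O(sup_{[2n,2n+2]} |h'|) = O(n^{-γ})`, which is summable because `γ > 1`;
hence `p^{(δ)}_{n,m} - ι (2n)` converges for every fixed `m`. Since `h ≥ 0`, raising the threshold
`2|m|^δ` only drops terms, so `0 ≤ p^{(δ)}_{n,m}` is bounded by the threshold-`0` sum of the parity
of `m`, which is `≤ 2 ι (2n)` eventually, uniformly in `m`. Dominated convergence against the
summable weights `‖c_m‖` then gives the claim.
-/

open MeasureTheory Filter Complex Asymptotics Topology
open scoped Classical

noncomputable section

/-- The moment function `m_ξ = ∫_0^∞ r^ξ dμ(r)`. -/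
def mom (μ : Measure ℝ) (ξ : ℝ) : ℝ := ∫ r in Set.Ioi (0:ℝ), r ^ ξ ∂μ

/-- `p^{(δ)}_{n,m} = Σ' h_μ(ℓ)`, sum over `ℓ` with `2|m|^δ < ℓ ≤ 2n` of the same parity
as `m`. -/
def pdel (h : ℝ → ℝ) (δ : ℝ) (n : ℕ) (m : ℤ) : ℝ :=
  ∑ l ∈ (Finset.range (2*n+1)).filter
      (fun l : ℕ => 2 * |(m:ℝ)| ^ δ < (l:ℝ) ∧ (l : ℤ) % 2 = m % 2), h l

theorem norm_integral_sub_smul_le_of_norm_deriv_le {E : Type*} [NormedAddCommGroup E]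
    [NormedSpace ℝ E] [CompleteSpace E] {f : ℝ → E} {a b s C : ℝ} (hab : a ≤ b)
    (hs : s ∈ Set.Icc a b) (hf : ∀ t ∈ Set.Icc a b, DifferentiableAt ℝ f t)
    (hC : ∀ t ∈ Set.Icc a b, ‖deriv f t‖ ≤ C) :
    ‖(∫ t in a..b, f t) - (b - a) • f s‖ ≤ C * (b - a) ^ 2 := by
  have hint : IntervalIntegrable f volume a b := by
    refine ContinuousOn.intervalIntegrable fun t ht => ?_
    rw [Set.uIcc_of_le hab] at ht
    exact (hf t ht).continuousAt.continuousWithinAt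
  have hpt : ∀ t ∈ Set.uIoc a b, ‖f t - f s‖ ≤ C * (b - a) := by
    intro t ht
    rw [Set.uIoc_of_le hab] at ht
    have ht' := Set.Ioc_subset_Icc_self ht
    calc ‖f t - f s‖ ≤ C * ‖t - s‖ :=
          (convex_Icc a b).norm_image_sub_le_of_norm_deriv_le hf hC hs ht'
      _ ≤ C * (b - a) := by
          have hC0 : 0 ≤ C := (norm_nonneg _).trans (hC s hs)
          gcongr
          rw [Real.norm_eq_abs, abs_le]
          constructor <;> linarith [hs.1, hs.2, ht'.1, ht'.2]
  calc ‖(∫ t in a..b, f t) - (b - a) • f s‖ = ‖∫ t in a..b, (f t - f s)‖ := by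
        rw [intervalIntegral.integral_sub hint intervalIntegrable_const,
          intervalIntegral.integral_const]
    _ ≤ C * (b - a) * |b - a| := intervalIntegral.norm_integral_le_of_norm_le_const hpt
    _ = C * (b - a) ^ 2 := by rw [abs_of_nonneg (sub_nonneg.2 hab)]; ring

theorem exists_tendsto_of_summable_sub_succ {E : Type*} [NormedAddCommGroup E] [CompleteSpace E]
    {u : ℕ → E} (hu : Summable fun n => u (n + 1) - u n) : ∃ L, Tendsto u atTop (𝓝 L) :=
  ⟨u 0 + ∑' n, (u (n + 1) - u n), by
    simpa only [Finset.sum_range_sub, add_sub_cancel] using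
      hu.hasSum.tendsto_sum_nat.const_add (u 0)⟩

def paritySum (h : ℝ → ℝ) (a : ℝ) (m : ℤ) (n : ℕ) : ℝ :=
  ∑ l ∈ (Finset.range (2*n+1)).filter (fun l : ℕ => a < (l:ℝ) ∧ (l : ℤ) % 2 = m % 2), h l

theorem pdel_eq_paritySum (h : ℝ → ℝ) (δ : ℝ) (n : ℕ) (m : ℤ) :
    pdel h δ n m = paritySum h (2 * |(m:ℝ)| ^ δ) m n := rfl

theorem paritySum_emod_two (h : ℝ → ℝ) (a : ℝ) (m : ℤ) (n : ℕ) :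
    paritySum h a (m % 2) n = paritySum h a m n := by
  simp only [paritySum, Int.emod_emod_of_dvd m (dvd_refl 2)]

theorem paritySum_succ (h : ℝ → ℝ) {a : ℝ} (m : ℤ) {n : ℕ} (ha : a < 2 * n + 1) :
    ∃ l : ℕ, 2 * n + 1 ≤ l ∧ l ≤ 2 * n + 2 ∧
      paritySum h a m (n + 1) = paritySum h a m n + h l := by
  have hrange : Finset.range (2 * (n + 1) + 1)
      = insert (2 * n + 2) (insert (2 * n + 1) (Finset.range (2 * n + 1))) := by
    rw [show 2 * (n + 1) + 1 = 2 * n + 1 + 1 + 1 by ring, Finset.range_add_one,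
      Finset.range_add_one]
  have ha₁ : a < ((2 * n + 1 : ℕ) : ℝ) := by push_cast; linarith
  have ha₂ : a < ((2 * n + 2 : ℕ) : ℝ) := by push_cast; linarith
  simp only [paritySum, hrange, Finset.filter_insert]
  rcases Int.emod_two_eq_zero_or_one m with hm | hm
  · refine ⟨2 * n + 2, by omega, le_rfl, ?_⟩
    rw [if_pos ⟨ha₂, by omega⟩, if_neg (fun h => by omega), Finset.sum_insert (by simp),
      add_comm]
  · refine ⟨2 * n + 1, le_rfl, by omega, ?_⟩
    rw [if_neg (fun h => by omega), if_pos ⟨ha₁, by omega⟩, Finset.sum_insert (by simp),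
      add_comm]

theorem paritySum_nonneg {h : ℝ → ℝ} (hh : ∀ x, 0 < x → 0 ≤ h x) {a : ℝ} (ha : 0 ≤ a)
    (m : ℤ) (n : ℕ) : 0 ≤ paritySum h a m n :=
  Finset.sum_nonneg fun l hl => hh l (ha.trans_lt (Finset.mem_filter.1 hl).2.1)

theorem paritySum_anti {h : ℝ → ℝ} (hh : ∀ x, 0 < x → 0 ≤ h x) {a b : ℝ} (ha : 0 ≤ a)
    (hab : a ≤ b) (m : ℤ) (n : ℕ) : paritySum h b m n ≤ paritySum h a m n := by
  refine Finset.sum_le_sum_of_subset_of_nonneg ?_ fun l hl _ => ?_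
  · exact Finset.monotone_filter_right _ fun l _ hl => ⟨hab.trans_lt hl.1, hl.2⟩
  · exact hh l (ha.trans_lt (Finset.mem_filter.1 hl).2.1)

theorem exists_eventually_norm_deriv_le {h : ℝ → ℝ} {γ : ℝ} (hγ : 0 ≤ γ)
    (hdiff : ∀ᶠ x in atTop, DifferentiableAt ℝ h x)
    (hderiv : deriv h =O[atTop] fun x => x ^ (-γ)) :
    ∃ C, ∀ᶠ x in atTop, ∀ t, x ≤ t → DifferentiableAt ℝ h t ∧ ‖deriv h t‖ ≤ C * x ^ (-γ) := by
  obtain ⟨C, hC₀, hC⟩ := hderiv.exists_pos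
  obtain ⟨X, hX⟩ := eventually_atTop.1 (hdiff.and hC.bound)
  refine ⟨C, ?_⟩
  filter_upwards [eventually_ge_atTop X, eventually_gt_atTop 0] with x hxX hx t hxt
  refine ⟨(hX t (hxX.trans hxt)).1, (hX t (hxX.trans hxt)).2.trans ?_⟩
  rw [Real.norm_of_nonneg (Real.rpow_nonneg (hx.le.trans hxt) _)]
  exact mul_le_mul_of_nonneg_left (Real.rpow_le_rpow_of_nonpos hx hxt (neg_nonpos.2 hγ)) hC₀.le

theorem isBigO_paritySum_succ_sub_integral {h : ℝ → ℝ} {γ : ℝ} (hγ : 0 ≤ γ)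
    (hdiff : ∀ᶠ x in atTop, DifferentiableAt ℝ h x)
    (hderiv : deriv h =O[atTop] fun x => x ^ (-γ)) (a : ℝ) (m : ℤ) :
    (fun n : ℕ => paritySum h a m (n + 1) - paritySum h a m n
        - (1/2) * ∫ t in (2 * n : ℝ)..2 * n + 2, h t) =O[atTop] fun n : ℕ => (n : ℝ) ^ (-γ) := by
  obtain ⟨C, hC⟩ := exists_eventually_norm_deriv_le hγ hdiff hderiv
  have h2n : Tendsto (fun n : ℕ => (2 * n : ℝ)) atTop atTop :=
    tendsto_natCast_atTop_atTop.const_mul_atTop two_pos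
  refine IsBigO.of_bound (2 * C * 2 ^ (-γ)) ?_
  filter_upwards [h2n.eventually hC, h2n.eventually (eventually_ge_atTop a)] with n hCn han
  obtain ⟨l, hl₁, hl₂, hl⟩ := paritySum_succ h m (show a < 2 * n + 1 by linarith)
  have hl' : (l : ℝ) ∈ Set.Icc (2 * n : ℝ) (2 * n + 2) := by
    constructor
    · exact_mod_cast (show 2 * n ≤ l by omega)
    · exact_mod_cast hl₂
  have hstep := norm_integral_sub_smul_le_of_norm_deriv_le (by linarith) hl'
    (fun t ht => (hCn t ht.1).1) (fun t ht => (hCn t ht.1).2)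
  rw [show (2 * n + 2 : ℝ) - 2 * n = 2 by ring] at hstep
  rw [hl, add_sub_cancel_left, Real.norm_of_nonneg (Real.rpow_nonneg (Nat.cast_nonneg n) _)]
  calc ‖h l - 1 / 2 * ∫ t in (2 * n : ℝ)..2 * n + 2, h t‖
      = 1 / 2 * ‖(∫ t in (2 * n : ℝ)..2 * n + 2, h t) - (2 : ℝ) • h l‖ := by
        rw [smul_eq_mul, ← abs_of_pos (one_half_pos (α := ℝ)), Real.norm_eq_abs,
          Real.norm_eq_abs, ← abs_mul, ← abs_neg]
        ring_nf
    _ ≤ 1 / 2 * (C * (2 * n) ^ (-γ) * 2 ^ 2) := by gcongr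
    _ = 2 * C * 2 ^ (-γ) * (n : ℝ) ^ (-γ) := by
        rw [Real.mul_rpow zero_le_two (Nat.cast_nonneg n)]; ring

theorem exists_tendsto_paritySum_sub_integral {h : ℝ → ℝ} {γ : ℝ} (hγ : 1 < γ)
    (hdiff : ∀ x, 0 < x → DifferentiableAt ℝ h x)
    (hderiv : deriv h =O[atTop] fun x => x ^ (-γ)) (a : ℝ) (m : ℤ) :
    ∃ L, Tendsto (fun n : ℕ => paritySum h a m n - (1/2) * ∫ t in (1:ℝ)..2 * n, h t)
      atTop (𝓝 L) := by
  refine exists_tendsto_of_summable_sub_succ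
    (summable_of_isBigO_nat (Real.summable_nat_rpow.2 (neg_lt_neg hγ)) ?_)
  refine (isBigO_paritySum_succ_sub_integral (by linarith) ((eventually_gt_atTop 0).mono hdiff)
    hderiv a m).congr' ?_ EventuallyEq.rfl
  have hint : ∀ x, 0 < x → IntervalIntegrable h volume 1 x := fun x hx =>
    ContinuousOn.intervalIntegrable fun t ht =>
      (hdiff t ((lt_min one_pos hx).trans_le ht.1)).continuousAt.continuousWithinAt
  filter_upwards [eventually_ge_atTop 1] with n hn
  have hn' : (1:ℝ) ≤ n := by exact_mod_cast hn
  rw [← intervalIntegral.integral_interval_sub_left (hint (2 * n + 2) (by linarith))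
    (hint (2 * n) (by linarith))]
  push_cast
  ring_nf

theorem tsum_mul_sub_mul_tsum_eq {ι 𝕜 : Type*} [NormedField 𝕜] [CompleteSpace 𝕜]
    {c f : ι → 𝕜} {g : 𝕜} {B : ℝ} (hc : Summable fun i => ‖c i‖) (hf : ∀ i, ‖f i‖ ≤ B * ‖g‖) :
    ∑' i, c i * f i - g * ∑' i, c i = g * ∑' i, c i * ((f i - g) / g) := by
  rcases eq_or_ne g 0 with rfl | hg
  -- the junk value `x / 0 = 0` is harmless: the bound forces `f = 0`, so both sides vanish
  · have hf0 : ∀ i, f i = 0 := fun i => norm_le_zero_iff.1 (by simpa using hf i)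
    simp [hf0]
  have hcf : Summable fun i => c i * f i :=
    hc.mul_right (B * ‖g‖) |>.of_norm_bounded fun i => by
      rw [norm_mul]; exact mul_le_mul_of_nonneg_left (hf i) (norm_nonneg _)
  rw [← tsum_mul_left, ← tsum_mul_left, ← hcf.tsum_sub (hc.of_norm.mul_left g)]
  congr 1 with i
  field_simp

theorem isLittleO_tsum_mul_sub_mul_tsum {α ι 𝕜 : Type*} [NormedField 𝕜] [CompleteSpace 𝕜]
    {l : Filter α} {c : ι → 𝕜} {f : α → ι → 𝕜} {g : α → 𝕜} {B : ℝ}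
    (hc : Summable fun i => ‖c i‖) (hf : ∀ i, (fun x => f x i - g x) =o[l] g)
    (hB : ∀ᶠ x in l, ∀ i, ‖f x i‖ ≤ B * ‖g x‖) :
    (fun x => ∑' i, c i * f x i - g x * ∑' i, c i) =o[l] g := by
  have hratio : ∀ᶠ x in l, ∀ i, ‖c i * ((f x i - g x) / g x)‖ ≤ ‖c i‖ * (|B| + 1) := by
    filter_upwards [hB] with x hx i
    rw [norm_mul, norm_div]
    refine mul_le_mul_of_nonneg_left ?_ (norm_nonneg _)
    rcases eq_or_ne (g x) 0 with hg | hg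
    · simp only [hg, div_zero, norm_zero]; positivity
    rw [div_le_iff₀ (norm_pos_iff.2 hg)]
    calc ‖f x i - g x‖ ≤ ‖f x i‖ + ‖g x‖ := norm_sub_le _ _
      _ ≤ B * ‖g x‖ + ‖g x‖ := by linarith [hx i]
      _ ≤ (|B| + 1) * ‖g x‖ := by nlinarith [le_abs_self B, norm_nonneg (g x)]
  refine isLittleO_iff_exists_eq_mul.2 ⟨fun x => ∑' i, c i * ((f x i - g x) / g x), ?_, ?_⟩
  · simpa using tendsto_tsum_of_dominated_convergence (hc.mul_right (|B| + 1))
      (fun i => (hf i).tendsto_div_nhds_zero.const_mul (c i)) hratio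
  · filter_upwards [hB] with x hx
    rw [Pi.mul_apply, tsum_mul_sub_mul_tsum_eq hc hx, mul_comm]

theorem eventually_paritySum_le_two_mul {h : ℝ → ℝ} {g : ℕ → ℝ} {a : ℝ}
    (hg : Tendsto g atTop atTop)
    (hconv : ∀ m : ℤ, ∃ L, Tendsto (fun n => paritySum h a m n - g n) atTop (𝓝 L)) :
    ∀ᶠ n in atTop, ∀ m : ℤ, paritySum h a m n ≤ 2 * g n := by
  have hr : ∀ r : ℤ, ∀ᶠ n in atTop, paritySum h a r n ≤ 2 * g n := by
    intro r
    obtain ⟨L, hL⟩ := hconv r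
    filter_upwards [hL.eventually_le_const (lt_add_one L), hg.eventually_ge_atTop (L + 1)]
      with n hn₁ hn₂
    linarith
  filter_upwards [hr 0, hr 1] with n h₀ h₁ m
  rw [← paritySum_emod_two]
  rcases Int.emod_two_eq_zero_or_one m with hm | hm <;> rw [hm] <;> assumption

theorem weighted_pdel_asymptotics_general
    -- moment condition (C2):
    (h : ℝ → ℝ) (γ : ℝ)
    (hγ : 1 < γ)
    (hh_nonneg : ∀ ξ : ℝ, 0 < ξ → 0 ≤ h ξ)
    (hh_diff : ∀ ξ : ℝ, 0 < ξ → DifferentiableAt ℝ h ξ)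
    (hh'O : deriv h =O[atTop] fun ξ : ℝ => ξ ^ (-γ))
    (ι : ℝ → ℝ) (hι_def : ∀ x : ℝ, ι x = (1/2) * ∫ t in (1:ℝ)..x, h t)
    (hι_top : Tendsto ι atTop atTop)
    (δ : ℝ)
    (c : ℤ → ℂ) (hc : Summable fun m : ℤ => ‖c m‖) :
    (fun n : ℕ => (∑' m : ℤ, c m * (pdel h δ n m : ℂ)) - (ι (2*n) : ℂ) * ∑' m : ℤ, c m)
      =o[atTop] fun n : ℕ => ι (2*n) := by
  have hconv (a : ℝ) (m : ℤ) :
      ∃ L, Tendsto (fun n : ℕ => paritySum h a m n - ι (2 * n)) atTop (𝓝 L) := by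
    simpa only [hι_def] using exists_tendsto_paritySum_sub_integral hγ hh_diff hh'O a m
  have hι2n : Tendsto (fun n : ℕ => ι (2 * n)) atTop atTop :=
    hι_top.comp (tendsto_natCast_atTop_atTop.const_mul_atTop two_pos)
  have hpdel (m : ℤ) : (fun n : ℕ => (pdel h δ n m : ℂ) - ι (2 * n))
      =o[atTop] fun n : ℕ => (ι (2 * n) : ℂ) := by
    obtain ⟨L, hL⟩ := hconv (2 * |(m:ℝ)| ^ δ) m
    refine ((Complex.continuous_ofReal.tendsto L).comp hL |>.isBigO_one ℝ).trans_isLittleO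
      ((isLittleO_one_left_iff ℝ).2 ?_) |>.congr_left fun n => by simp [pdel_eq_paritySum]
    simpa only [Complex.norm_real, Function.comp_def] using tendsto_norm_atTop_atTop.comp hι2n
  have hbound : ∀ᶠ n in atTop, ∀ m : ℤ, ‖(pdel h δ n m : ℂ)‖ ≤ 2 * ‖(ι (2 * n) : ℂ)‖ := by
    filter_upwards [eventually_paritySum_le_two_mul hι2n (hconv 0), hι2n.eventually_ge_atTop 0]
      with n hn hι m
    rw [Complex.norm_real, Complex.norm_real, pdel_eq_paritySum,
      Real.norm_of_nonneg (paritySum_nonneg hh_nonneg (by positivity) m n),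
      Real.norm_of_nonneg hι]
    exact (paritySum_anti hh_nonneg le_rfl (by positivity) m n).trans (hn m)
  exact (isLittleO_tsum_mul_sub_mul_tsum hc hpdel hbound).trans_isBigO
    (isBigO_of_le _ fun n => by simp)

/-- Under moment condition (C2) and `δ > 1`, for every absolutely summable
sequence `(c_m)`, `Σ_m c_m p^{(δ)}_{n,m} = ι_μ(2n) Σ_m c_m + o(ι_μ(2n))` as `n → ∞`. -/
theorem weighted_pdel_asymptotics
    (μ : Measure ℝ)
    (hsupp : μ (Set.Iic (0:ℝ)) = 0)
    (hpos : μ (Set.Ioi (0:ℝ)) ≠ 0)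
    (hmom : ∀ ξ : ℝ, 0 ≤ ξ → IntegrableOn (fun r : ℝ => r ^ ξ) (Set.Ioi (0:ℝ)) μ)
    -- moment condition (C2):
    (h : ℝ → ℝ) (β γ ϱ : ℝ)
    (hβ₁ : 1/2 < β) (hβ₂ : β ≤ 1) (hγ : 1 < γ) (hϱ : 1 < ϱ)
    (hh_nonneg : ∀ ξ : ℝ, 0 < ξ → 0 ≤ h ξ)
    (hh_diff : ∀ ξ : ℝ, 0 < ξ → DifferentiableAt ℝ h ξ)
    (hC2 : (fun ξ => deriv (deriv fun t => Real.log (mom μ t)) ξ - h ξ)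
              =O[atTop] fun ξ : ℝ => ξ ^ (-ϱ))
    (hhO : h =O[atTop] fun ξ : ℝ => ξ ^ (-β))
    (hh'O : deriv h =O[atTop] fun ξ : ℝ => ξ ^ (-γ))
    (ι : ℝ → ℝ) (hι_def : ∀ x : ℝ, ι x = (1/2) * ∫ t in (1:ℝ)..x, h t)
    (hι_top : Tendsto ι atTop atTop)
    (δ : ℝ) (hδ : 1 < δ)
    (c : ℤ → ℂ) (hc : Summable fun m : ℤ => ‖c m‖) :
    (fun n : ℕ => (∑' m : ℤ, c m * (pdel h δ n m : ℂ)) - (ι (2*n) : ℂ) * ∑' m : ℤ, c m)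
      =o[atTop] fun n : ℕ => ι (2*n) :=
  weighted_pdel_asymptotics_general h γ hγ hh_nonneg hh_diff hh'O ι hι_def hι_top δ c hc

end
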